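/- Directional derivative identity for the quantile objective: let Γ(β) = Σ_{i=1}^n ρ_τ(Y_i − g_i(β)) where each g_i : ℝ^p → ℝ is differentiable at β̂ with gradient ∇g_i(β̂). Then for any unit vector γ, the one-sided directional derivative of Γ at β̂ in direction γ equals −Σ_{Y_i ≠ g_i(β̂)} ψ_τ(Y_i − g_i(β̂)) ⟨γ, ∇g_i(β̂)⟩ − Σ_{Y_i = g_i(β̂)} ψ_τ(−⟨γ, ∇g_i(β̂)⟩) ⟨γ, ∇g_i(β̂)⟩, where ψ_τ(e) = τ − 1_{e<0}. -/

import Mathlib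

/-!
Along the ray `t ↦ β̂ + t γ` each residual `Y i - g i (β̂ + t γ)` has derivative `-(D i γ)` at
`t = 0`. Where the residual is nonzero, `ρ_τ` is differentiable with derivative `ψ_τ` and the chain
rule applies. Where it vanishes, the positive homogeneity of `ρ_τ` turns the difference quotient of
`ρ_τ ∘ residual` into `ρ_τ` of the difference quotient of the residual, so its right limit is
`ρ_τ (-(D i γ)) = -ψ_τ (-(D i γ)) D i γ`. Summing the one-sided derivatives gives the formula.
-/

open Filter Topology Finset

noncomputable def rho (τ e : ℝ) : ℝ := (τ - if e < 0 then 1 else 0) * e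

noncomputable def psi (τ e : ℝ) : ℝ := τ - if e < 0 then 1 else 0

theorem HasDerivWithinAt.comp_of_posHomogeneous {f φ : ℝ → ℝ} {d x : ℝ}
    (hf : ContinuousAt f d) (hhom : ∀ c > 0, ∀ y, f (c * y) = c * f y)
    (hφ : HasDerivWithinAt φ d (Set.Ioi x) x) (hφx : φ x = 0) :
    HasDerivWithinAt (fun t => f (φ t)) (f d) (Set.Ioi x) x := by
  have hf0 : f 0 = 0 := by
    have h2 := hhom 2 two_pos 0
    rw [mul_zero] at h2
    linarith
  rw [hasDerivWithinAt_iff_tendsto_slope' Set.self_notMem_Ioi] at hφ ⊢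
  refine (hf.tendsto.comp hφ).congr' ?_
  filter_upwards [self_mem_nhdsWithin] with t (ht : x < t)
  simp only [Function.comp_apply, slope_def_field, hφx, hf0, sub_zero, div_eq_inv_mul]
  exact hhom _ (inv_pos.mpr (sub_pos.mpr ht)) _

namespace QuantileLoss

variable (τ : ℝ)

theorem rho_eq_psi_mul (e : ℝ) : rho τ e = psi τ e * e := rfl

theorem psi_mul_of_pos {c : ℝ} (hc : 0 < c) (e : ℝ) : psi τ (c * e) = psi τ e := by
  simp only [psi, mul_neg_iff, hc, not_lt_of_gt hc, true_and, false_and, or_false]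

theorem rho_mul_of_pos {c : ℝ} (hc : 0 < c) (e : ℝ) : rho τ (c * e) = c * rho τ e := by
  rw [rho_eq_psi_mul, rho_eq_psi_mul, psi_mul_of_pos τ hc]
  ring

theorem rho_eq_mul_sub_min (e : ℝ) : rho τ e = τ * e - min e 0 := by
  rcases lt_or_ge e 0 with he | he
  · simp [rho, he, min_eq_left he.le, sub_mul]
  · simp [rho, not_lt.mpr he, min_eq_right he]

theorem continuous_rho : Continuous (rho τ) := by
  simp only [funext (rho_eq_mul_sub_min τ)]
  fun_prop

theorem hasDerivAt_rho {e : ℝ} (he : e ≠ 0) : HasDerivAt (rho τ) (psi τ e) e := by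
  have hlin : HasDerivAt (fun x => psi τ e * x) (psi τ e) e := by
    simpa using (hasDerivAt_id e).const_mul (psi τ e)
  refine hlin.congr_of_eventuallyEq ?_
  have hpsi : ∀ᶠ x in 𝓝 e, psi τ x = psi τ e := by
    rcases he.lt_or_gt with hneg | hpos
    · filter_upwards [Iio_mem_nhds hneg] with x (hx : x < 0)
      simp [psi, hx, hneg]
    · filter_upwards [Ioi_mem_nhds hpos] with x (hx : 0 < x)
      simp [psi, not_lt.mpr hx.le, not_lt.mpr hpos.le]
  filter_upwards [hpsi] with x hx
  rw [rho_eq_psi_mul, hx]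

theorem _root_.HasDerivWithinAt.rho_comp {φ : ℝ → ℝ} {d x : ℝ}
    (hφ : HasDerivWithinAt φ d (Set.Ioi x) x) :
    HasDerivWithinAt (fun t => rho τ (φ t))
      (if φ x = 0 then rho τ d else psi τ (φ x) * d) (Set.Ioi x) x := by
  split_ifs with hφx
  · exact hφ.comp_of_posHomogeneous (continuous_rho τ).continuousAt
      (fun _ hc => rho_mul_of_pos τ hc) hφx
  · exact (hasDerivAt_rho τ hφx).comp_hasDerivWithinAt x hφ

end QuantileLoss

theorem quantile_objective_directional_derivative_general
    (τ : ℝ)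
    (n p : ℕ) (Y : Fin n → ℝ)
    (g : Fin n → EuclideanSpace ℝ (Fin p) → ℝ)
    (βhat : EuclideanSpace ℝ (Fin p))
    (D : Fin n → (EuclideanSpace ℝ (Fin p) →L[ℝ] ℝ))
    (hD : ∀ i, HasFDerivAt (g i) (D i) βhat)
    (Γ : EuclideanSpace ℝ (Fin p) → ℝ)
    (hΓ : Γ = fun β => ∑ i, rho τ (Y i - g i β))
    (γ : EuclideanSpace ℝ (Fin p)) :
    Tendsto (fun t : ℝ => t⁻¹ * (Γ (βhat + t • γ) - Γ βhat)) (𝓝[>] 0)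
      (𝓝 (-(∑ i, if Y i ≠ g i βhat then psi τ (Y i - g i βhat) * D i γ else 0) -
          ∑ i, if Y i = g i βhat then psi τ (-(D i γ)) * D i γ else 0)) := by
  subst hΓ
  have hresidual : ∀ i, HasDerivWithinAt (fun t : ℝ => Y i - g i (βhat + t • γ))
      (-(D i γ)) (Set.Ioi 0) 0 := fun i =>
    (HasDerivAt.const_sub (Y i) ((hD i).hasLineDerivAt γ)).hasDerivWithinAt
  have hΓ' := HasDerivWithinAt.fun_sum (u := univ) fun i _ => (hresidual i).rho_comp τ
  convert (hasDerivWithinAt_iff_tendsto_slope' Set.self_notMem_Ioi).mp hΓ' using 2 with t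
  · simp [slope_def_field, div_eq_inv_mul]
  · rw [← sum_neg_distrib, sub_eq_add_neg, ← sum_neg_distrib, ← sum_add_distrib]
    refine sum_congr rfl fun i _ => ?_
    by_cases hi : Y i = g i βhat
    · simp [hi, QuantileLoss.rho_eq_psi_mul]
    · simp [hi, sub_eq_zero]

theorem quantile_objective_directional_derivative
    (τ : ℝ) (hτ : τ ∈ Set.Ioo (0:ℝ) 1)
    (n p : ℕ) (Y : Fin n → ℝ)
    (g : Fin n → EuclideanSpace ℝ (Fin p) → ℝ)
    (βhat : EuclideanSpace ℝ (Fin p))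
    (D : Fin n → (EuclideanSpace ℝ (Fin p) →L[ℝ] ℝ))
    (hD : ∀ i, HasFDerivAt (g i) (D i) βhat)
    (Γ : EuclideanSpace ℝ (Fin p) → ℝ)
    (hΓ : Γ = fun β => ∑ i, rho τ (Y i - g i β))
    (γ : EuclideanSpace ℝ (Fin p)) (hγ : ‖γ‖ = 1) :
    Tendsto (fun t : ℝ => t⁻¹ * (Γ (βhat + t • γ) - Γ βhat)) (𝓝[>] 0)
      (𝓝 (-(∑ i, if Y i ≠ g i βhat then psi τ (Y i - g i βhat) * D i γ else 0) -
          ∑ i, if Y i = g i βhat then psi τ (-(D i γ)) * D i γ else 0)) :=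
  quantile_objective_directional_derivative_general τ n p Y g βhat D hD Γ hΓ γ
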